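/- arXiv:2406.14532 — 5 statements merged into one kernel-verified Lean document; each statement's English description precedes it below -/
import Mathlib

section
/- Let w : Y × Y → ℝ satisfy w(y1,y2) > 0 for all y1, y2 ∈ Y. For a full-support probability vector π on Y define the implicit reward h_π(y) = β·log(π(y)/πref(y)) and the population DPO loss L(π) = Σ_{y1,y2∈Y} w(y1,y2)·[ σ(r(y1)−r(y2))·(−log σ(h_π(y1)−h_π(y2))) + σ(r(y2)−r(y1))·(−log σ(h_π(y2)−h_π(y1))) ], i.e., the expected cross-entropy loss over pairs labeled by the Bradley–Terry preference probabilities induced by r. Then L(π) ≥ L(π*) for every full-support probability vector π on Y, with equality if and only if π = π*; the Gibbs tilt π* is the unique minimizer of the population DPO loss. -/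
open Real Finset

variable {Y : Type*} [Fintype Y] [Nonempty Y]

/-- The logistic sigmoid `σ(u) = 1 / (1 + exp (-u))`. -/
noncomputable def sigm (u : ℝ) : ℝ := 1 / (1 + Real.exp (-u))

/-- The partition constant `Z = ∑ y, πref y * exp (r y / β)`. -/
noncomputable def partZ (πref : Y → ℝ) (β : ℝ) (r : Y → ℝ) : ℝ :=
  ∑ y, πref y * Real.exp (r y / β)

/-- The Gibbs tilt `π*(y) = πref y * exp (r y / β) / Z`. -/
noncomputable def gibbs (πref : Y → ℝ) (β : ℝ) (r : Y → ℝ) (y : Y) : ℝ :=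
  πref y * Real.exp (r y / β) / partZ πref β r

/-- The implicit reward `h_π(y) = β * log (π y / πref y)`. -/
noncomputable def implicitReward (πref : Y → ℝ) (β : ℝ) (q : Y → ℝ) (y : Y) : ℝ :=
  β * Real.log (q y / πref y)

/-- The population DPO loss: expected cross-entropy over pairs labeled by the
Bradley–Terry preference probabilities induced by the reward `r`. -/
noncomputable def dpoLoss (πref : Y → ℝ) (β : ℝ) (r : Y → ℝ) (w : Y → Y → ℝ)
    (q : Y → ℝ) : ℝ :=
  ∑ y1, ∑ y2, w y1 y2 *
    (sigm (r y1 - r y2) *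
        (-Real.log (sigm (implicitReward πref β q y1 - implicitReward πref β q y2))) +
      sigm (r y2 - r y1) *
        (-Real.log (sigm (implicitReward πref β q y2 - implicitReward πref β q y1))))

/-!
Writing `p = σ(r y₁ - r y₂)` and `s = σ(h_π y₁ - h_π y₂)`, the pair `(y₁, y₂)` contributes
`w(y₁, y₂)` times the binary cross-entropy `-p log s - (1 - p) log (1 - s)`, which by Gibbs'
inequality (`log x ≤ x - 1`) is at least the binary entropy of `p`, with equality only at `s = p`.
The implicit reward of the Gibbs tilt is `r - β log Z`, so it attains `s = p` for every pair
simultaneously. Conversely, matching all differences `h_π y₁ - h_π y₂ = r y₁ - r y₂` pins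
`π` down up to a positive factor, which normalization fixes.
-/

lemma mul_log_div_lt_sub {a b : ℝ} (ha : 0 < a) (hb : 0 < b) (hab : b ≠ a) :
    a * log (b / a) < b - a := by
  have hlt : log (b / a) < b / a - 1 :=
    log_lt_sub_one_of_pos (div_pos hb ha) (by rwa [ne_eq, div_eq_one_iff_eq ha.ne'])
  calc a * log (b / a) < a * (b / a - 1) := mul_lt_mul_of_pos_left hlt ha
    _ = b - a := by field_simp

lemma mul_log_div_le_sub {a b : ℝ} (ha : 0 < a) (hb : 0 < b) : a * log (b / a) ≤ b - a := by
  rcases eq_or_ne b a with rfl | hab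
  · simp [div_self ha.ne']
  · exact (mul_log_div_lt_sub ha hb hab).le

noncomputable def binCrossEntropy (p s : ℝ) : ℝ := p * -log s + (1 - p) * -log (1 - s)

lemma binCrossEntropy_self_lt {p s : ℝ} (hp₀ : 0 < p) (hp₁ : p < 1) (hs₀ : 0 < s) (hs₁ : s < 1)
    (hsp : s ≠ p) : binCrossEntropy p p < binCrossEntropy p s := by
  have h₁ := mul_log_div_lt_sub hp₀ hs₀ hsp
  have h₂ := mul_log_div_le_sub (sub_pos.2 hp₁) (sub_pos.2 hs₁)
  rw [log_div hs₀.ne' hp₀.ne'] at h₁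
  rw [log_div (sub_pos.2 hs₁).ne' (sub_pos.2 hp₁).ne'] at h₂
  unfold binCrossEntropy
  linarith

lemma binCrossEntropy_self_le {p s : ℝ} (hp₀ : 0 < p) (hp₁ : p < 1) (hs₀ : 0 < s) (hs₁ : s < 1) :
    binCrossEntropy p p ≤ binCrossEntropy p s := by
  rcases eq_or_ne s p with rfl | hsp
  · exact le_rfl
  · exact (binCrossEntropy_self_lt hp₀ hp₁ hs₀ hs₁ hsp).le

lemma binCrossEntropy_eq_self_iff {p s : ℝ} (hp₀ : 0 < p) (hp₁ : p < 1) (hs₀ : 0 < s)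
    (hs₁ : s < 1) : binCrossEntropy p p = binCrossEntropy p s ↔ s = p := by
  refine ⟨fun h ↦ ?_, fun h ↦ h ▸ rfl⟩
  by_contra hsp
  exact (binCrossEntropy_self_lt hp₀ hp₁ hs₀ hs₁ hsp).ne h

lemma eq_of_log_sub_eq {α : Type*} [Fintype α] {f g : α → ℝ} (hf : ∀ a, 0 < f a)
    (hg : ∀ a, 0 < g a) (hsum : ∑ a, f a = ∑ a, g a)
    (h : ∀ a b, log (f a) - log (f b) = log (g a) - log (g b)) : f = g := by
  funext a
  have hcross : ∀ b, f a * g b = f b * g a := fun b ↦ by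
    refine log_injOn_pos (mul_pos (hf a) (hg b)) (mul_pos (hf b) (hg a)) ?_
    rw [log_mul (hf a).ne' (hg b).ne', log_mul (hf b).ne' (hg a).ne']
    linarith [h a b]
  have hg_sum : 0 < ∑ b, g b := sum_pos (fun b _ ↦ hg b) ⟨a, mem_univ a⟩
  have : f a * ∑ b, g b = g a * ∑ b, g b := by
    rw [mul_sum, mul_comm (g a), ← hsum, sum_mul]
    exact sum_congr rfl fun b _ ↦ hcross b
  exact mul_right_cancel₀ hg_sum.ne' this

lemma sigm_eq_sigmoid : sigm = sigmoid := by
  funext u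
  rw [sigm, sigmoid, one_div]

lemma dpoLoss_eq_sum_binCrossEntropy {α : Type*} [Fintype α] (πref : α → ℝ) (β : ℝ)
    (r : α → ℝ) (w : α → α → ℝ) (q : α → ℝ) :
    dpoLoss πref β r w q = ∑ y : α × α, w y.1 y.2 *
      binCrossEntropy (sigmoid (r y.1 - r y.2))
        (sigmoid (implicitReward πref β q y.1 - implicitReward πref β q y.2)) := by
  rw [Fintype.sum_prod_type, dpoLoss]
  refine sum_congr rfl fun y₁ _ ↦ sum_congr rfl fun y₂ _ ↦ ?_
  dsimp only
  rw [sigm_eq_sigmoid, binCrossEntropy, ← neg_sub (r y₁), ← neg_sub (implicitReward πref β q y₁),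
    sigmoid_neg, sigmoid_neg]

lemma implicitReward_sub {α : Type*} {πref q : α → ℝ} (hπref : ∀ y, πref y ≠ 0)
    (hq : ∀ y, q y ≠ 0) (β : ℝ) (y₁ y₂ : α) :
    implicitReward πref β q y₁ - implicitReward πref β q y₂ =
      β * (log (q y₁) - log (q y₂) - (log (πref y₁) - log (πref y₂))) := by
  simp only [implicitReward, log_div (hq _) (hπref _)]
  ring

section Gibbs

variable {α : Type*} [Fintype α] [Nonempty α] {πref : α → ℝ} {β : ℝ}

lemma partZ_pos (hπref : ∀ y, 0 < πref y) (r : α → ℝ) : 0 < partZ πref β r :=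
  sum_pos (fun y _ ↦ mul_pos (hπref y) (exp_pos _)) univ_nonempty

lemma gibbs_pos (hπref : ∀ y, 0 < πref y) (r : α → ℝ) (y : α) : 0 < gibbs πref β r y :=
  div_pos (mul_pos (hπref y) (exp_pos _)) (partZ_pos hπref r)

lemma sum_gibbs (hπref : ∀ y, 0 < πref y) (r : α → ℝ) : ∑ y, gibbs πref β r y = 1 := by
  simp only [gibbs, ← sum_div]
  exact div_self (partZ_pos hπref r).ne'

lemma implicitReward_gibbs (hπref : ∀ y, 0 < πref y) (hβ : β ≠ 0) (r : α → ℝ) (y : α) :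
    implicitReward πref β (gibbs πref β r) y = r y - β * log (partZ πref β r) := by
  have hratio : gibbs πref β r y / πref y = exp (r y / β) / partZ πref β r := by
    rw [gibbs, div_right_comm, mul_div_cancel_left₀ _ (hπref y).ne']
  rw [implicitReward, hratio, log_div (exp_pos _).ne' (partZ_pos hπref r).ne', log_exp]
  field_simp

lemma implicitReward_gibbs_sub (hπref : ∀ y, 0 < πref y) (hβ : β ≠ 0) (r : α → ℝ) (y₁ y₂ : α) :
    implicitReward πref β (gibbs πref β r) y₁ - implicitReward πref β (gibbs πref β r) y₂ =
      r y₁ - r y₂ := by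
  rw [implicitReward_gibbs hπref hβ, implicitReward_gibbs hπref hβ]
  ring

lemma implicitReward_sub_eq_iff_eq_gibbs (hπref : ∀ y, 0 < πref y) (hβ : β ≠ 0) (r : α → ℝ)
    {q : α → ℝ} (hq : ∀ y, 0 < q y) (hq_sum : ∑ y, q y = 1) :
    (∀ y₁ y₂, implicitReward πref β q y₁ - implicitReward πref β q y₂ = r y₁ - r y₂) ↔
      q = gibbs πref β r := by
  refine ⟨fun h ↦ ?_, fun h ↦ h ▸ implicitReward_gibbs_sub hπref hβ r⟩
  refine eq_of_log_sub_eq hq (gibbs_pos hπref r) (hq_sum.trans (sum_gibbs hπref r).symm)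
    fun y₁ y₂ ↦ ?_
  have hsub := (h y₁ y₂).trans (implicitReward_gibbs_sub hπref hβ r y₁ y₂).symm
  rw [implicitReward_sub (fun y ↦ (hπref y).ne') (fun y ↦ (hq y).ne'),
    implicitReward_sub (fun y ↦ (hπref y).ne') (fun y ↦ (gibbs_pos hπref r y).ne')] at hsub
  linarith [mul_left_cancel₀ hβ hsub]

end Gibbs

theorem dpoLoss_ge_gibbs_general
    (πref : Y → ℝ) (hrefpos : ∀ y, 0 < πref y)
    (β : ℝ) (hβ : 0 < β) (r : Y → ℝ)
    (w : Y → Y → ℝ) (hw : ∀ y1 y2, 0 < w y1 y2)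
    (q : Y → ℝ) (hqpos : ∀ y, 0 < q y) (hqsum : ∑ y, q y = 1) :
    dpoLoss πref β r w q ≥ dpoLoss πref β r w (gibbs πref β r) ∧
    (dpoLoss πref β r w q = dpoLoss πref β r w (gibbs πref β r) ↔
      q = gibbs πref β r) := by
  rw [dpoLoss_eq_sum_binCrossEntropy, dpoLoss_eq_sum_binCrossEntropy]
  simp only [implicitReward_gibbs_sub hrefpos hβ.ne']
  have hterm : ∀ y ∈ (univ : Finset (Y × Y)), w y.1 y.2 *
      binCrossEntropy (sigmoid (r y.1 - r y.2)) (sigmoid (r y.1 - r y.2)) ≤ w y.1 y.2 *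
      binCrossEntropy (sigmoid (r y.1 - r y.2))
        (sigmoid (implicitReward πref β q y.1 - implicitReward πref β q y.2)) := fun y _ ↦
    mul_le_mul_of_nonneg_left (binCrossEntropy_self_le (sigmoid_pos _) (sigmoid_lt_one _)
      (sigmoid_pos _) (sigmoid_lt_one _)) (hw _ _).le
  refine ⟨sum_le_sum hterm, ?_⟩
  rw [eq_comm, sum_eq_sum_iff_of_le hterm,
    ← implicitReward_sub_eq_iff_eq_gibbs hrefpos hβ.ne' r hqpos hqsum]
  simp only [mem_univ, true_implies, mul_right_inj' (hw _ _).ne', binCrossEntropy_eq_self_iff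
    (sigmoid_pos _) (sigmoid_lt_one _) (sigmoid_pos _) (sigmoid_lt_one _), sigmoid_inj,
    Prod.forall]

/-- The Gibbs tilt `π*` is the unique minimizer of the population DPO loss over
full-support probability vectors on `Y`. -/
theorem dpoLoss_ge_gibbs
    (πref : Y → ℝ) (hrefpos : ∀ y, 0 < πref y) (hrefsum : ∑ y, πref y = 1)
    (β : ℝ) (hβ : 0 < β) (r : Y → ℝ)
    (w : Y → Y → ℝ) (hw : ∀ y1 y2, 0 < w y1 y2)
    (q : Y → ℝ) (hqpos : ∀ y, 0 < q y) (hqsum : ∑ y, q y = 1) :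
    dpoLoss πref β r w q ≥ dpoLoss πref β r w (gibbs πref β r) ∧
    (dpoLoss πref β r w q = dpoLoss πref β r w (gibbs πref β r) ↔
      q = gibbs πref β r) :=
  dpoLoss_ge_gibbs_general πref hrefpos β hβ r w hw q hqpos hqsum
end

section
/- Let w : Y × Y → ℝ satisfy w(y1,y2) > 0 for all y1, y2 ∈ Y. Define, for a full-support probability vector π on Y, the implicit reward h_π(y) = β·log(π(y)/πref(y)), the population DPO loss L(π) = Σ_{y1,y2∈Y} w(y1,y2)·[ σ(r(y1)−r(y2))·(−log σ(h_π(y1)−h_π(y2))) + σ(r(y2)−r(y1))·(−log σ(h_π(y2)−h_π(y1))) ], and the advantage-weighted RL objective G(π) = Σ_{y∈Y} πref(y)·exp(r(y)/β)·log π(y). Then, among full-support probability vectors on Y, the unique minimizer of L and the unique maximizer of G coincide, and both equal the Gibbs tilt π*; i.e., DPO with Bradley–Terry pairs labeled by advantage differences and advantage-weighted RL have identical optima. -/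
open Real Finset

variable {Y : Type*} [Fintype Y] [Nonempty Y]

/-- The advantage-weighted RL objective
`G(π) = ∑ y, πref y * exp (r y / β) * log (π y)`. -/
noncomputable def awrObjective (πref : Y → ℝ) (β : ℝ) (r : Y → ℝ) (q : Y → ℝ) : ℝ :=
  ∑ y, πref y * Real.exp (r y / β) * Real.log (q y)

/-- Gibbs inequality for a single term, with equality characterization. -/
lemma gibbs_ineq {a b : ℝ} (ha : 0 < a) (hb : 0 < b) :
    a * Real.log b - a * Real.log a ≤ b - a ∧
    (a * Real.log b - a * Real.log a = b - a ↔ b = a) := by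
  have hd : 0 < b / a := div_pos hb ha
  have hlog : Real.log (b / a) = Real.log b - Real.log a := Real.log_div hb.ne' ha.ne'
  have h1 : Real.log (b / a) ≤ b / a - 1 := Real.log_le_sub_one_of_pos hd
  have key : a * Real.log (b/a) ≤ a * (b/a - 1) := mul_le_mul_of_nonneg_left h1 ha.le
  have hab : a * (b/a - 1) = b - a := by field_simp
  constructor
  · calc a * Real.log b - a * Real.log a = a * Real.log (b/a) := by rw [hlog]; ring
    _ ≤ a * (b/a - 1) := key
    _ = b - a := hab
  · constructor
    · intro heq
      by_contra hne
      have hba : b / a ≠ 1 := by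
        intro h; exact hne ((div_eq_one_iff_eq ha.ne').mp h)
      have hlt : Real.log (b/a) < b/a - 1 := Real.log_lt_sub_one_of_pos hd hba
      have hh : a * Real.log (b/a) < a * (b/a - 1) := mul_lt_mul_of_pos_left hlt ha
      rw [hab, hlog, mul_sub] at hh
      linarith
    · rintro rfl; simp

lemma sigm_pos (u : ℝ) : 0 < sigm u := by
  unfold sigm; positivity

lemma sigm_lt_one (u : ℝ) : sigm u < 1 := by
  unfold sigm
  rw [div_lt_one (by positivity)]
  linarith [Real.exp_pos (-u)]

lemma sigm_neg (u : ℝ) : sigm (-u) = 1 - sigm u := by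
  unfold sigm
  rw [neg_neg]
  have h1 : (0:ℝ) < 1 + Real.exp u := by positivity
  have h2 : (0:ℝ) < 1 + Real.exp (-u) := by positivity
  have he : Real.exp u * Real.exp (-u) = 1 := by
    rw [← Real.exp_add]; simp
  field_simp
  nlinarith [he]

lemma sigm_strictMono : StrictMono sigm := by
  intro u v huv
  unfold sigm
  have h1 : (0:ℝ) < 1 + Real.exp (-v) := by positivity
  have h2 : (0:ℝ) < 1 + Real.exp (-u) := by positivity
  rw [div_lt_div_iff₀ h2 h1]
  have : Real.exp (-v) < Real.exp (-u) := Real.exp_lt_exp.mpr (by linarith)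
  linarith

lemma sigm_injective : Function.Injective sigm := sigm_strictMono.injective

/-- Cross-entropy inequality: the binary cross-entropy of `s` against label
probability `p` is minimized exactly at `s = p`. -/
lemma ce_key {p s : ℝ} (hp0 : 0 < p) (hp1 : p < 1) (hs0 : 0 < s) (hs1 : s < 1) :
    p * (-Real.log p) + (1 - p) * (-Real.log (1 - p)) ≤
      p * (-Real.log s) + (1 - p) * (-Real.log (1 - s)) ∧
    (p * (-Real.log s) + (1 - p) * (-Real.log (1 - s)) =
      p * (-Real.log p) + (1 - p) * (-Real.log (1 - p)) ↔ s = p) := by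
  have h1 := gibbs_ineq hp0 hs0
  have h2 := gibbs_ineq (by linarith : (0:ℝ) < 1 - p) (by linarith : (0:ℝ) < 1 - s)
  constructor
  · nlinarith [h1.1, h2.1]
  · constructor
    · intro heq
      have hA : p * Real.log s - p * Real.log p = s - p := by
        by_contra hne
        have hlt := lt_of_le_of_ne h1.1 hne
        nlinarith [h2.1]
      exact h1.2.mp hA
    · rintro rfl; rfl

/-- Among full-support probability vectors on `Y`, the unique minimizer of the
population DPO loss and the unique maximizer of the advantage-weighted RL
objective coincide, and both equal the Gibbs tilt `π*`. -/
theorem dpo_and_awr_optima_coincide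
    (πref : Y → ℝ) (hrefpos : ∀ y, 0 < πref y) (hrefsum : ∑ y, πref y = 1)
    (β : ℝ) (hβ : 0 < β) (r : Y → ℝ)
    (w : Y → Y → ℝ) (hw : ∀ y1 y2, 0 < w y1 y2) :
    (∀ q : Y → ℝ, (∀ y, 0 < q y) → (∑ y, q y = 1) →
      dpoLoss πref β r w (gibbs πref β r) ≤ dpoLoss πref β r w q ∧
      (dpoLoss πref β r w q = dpoLoss πref β r w (gibbs πref β r) ↔
        q = gibbs πref β r)) ∧
    (∀ q : Y → ℝ, (∀ y, 0 < q y) → (∑ y, q y = 1) →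
      awrObjective πref β r q ≤ awrObjective πref β r (gibbs πref β r) ∧
      (awrObjective πref β r q = awrObjective πref β r (gibbs πref β r) ↔
        q = gibbs πref β r)) := by
  have hZ : 0 < partZ πref β r :=
    Finset.sum_pos (fun y _ => mul_pos (hrefpos y) (Real.exp_pos _)) Finset.univ_nonempty
  have hgpos : ∀ y, 0 < gibbs πref β r y :=
    fun y => div_pos (mul_pos (hrefpos y) (Real.exp_pos _)) hZ
  have hgsum : ∑ y, gibbs πref β r y = 1 := by
    unfold gibbs
    rw [← Finset.sum_div]
    exact div_self hZ.ne'
  have hrefZ : ∀ y, πref y * Real.exp (r y / β) = partZ πref β r * gibbs πref β r y := by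
    intro y; unfold gibbs; field_simp
  -- implicit reward of the Gibbs tilt
  have hIRg : ∀ y, implicitReward πref β (gibbs πref β r) y
      = r y - β * Real.log (partZ πref β r) := by
    intro y
    unfold implicitReward gibbs
    have h1 : (πref y * Real.exp (r y / β) / partZ πref β r) / πref y
        = Real.exp (r y / β) / partZ πref β r := by
      field_simp [(hrefpos y).ne']
    rw [h1, Real.log_div (Real.exp_pos _).ne' hZ.ne', Real.log_exp, mul_sub,
      mul_div_cancel₀ _ hβ.ne']
  -- if the implicit reward differences of q match those of r, then q = gibbs
  have hrecover : ∀ q : Y → ℝ, (∀ y, 0 < q y) → (∑ y, q y = 1) →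
      (∀ y1 y2 : Y, implicitReward πref β q y1 - implicitReward πref β q y2
        = r y1 - r y2) → q = gibbs πref β r := by
    intro q hq hqs hdiff
    obtain ⟨y0⟩ : Nonempty Y := inferInstance
    set c : ℝ := implicitReward πref β q y0 - r y0 with hc
    have hqy : ∀ y, q y = πref y * Real.exp (r y / β) * Real.exp (c / β) := by
      intro y
      have h1 : implicitReward πref β q y = r y + c := by
        have := hdiff y y0; rw [hc]; linarith
      unfold implicitReward at h1
      have h2 : Real.log (q y / πref y) = (r y + c) / β := by
        field_simp
        linarith
      have h3 : q y / πref y = Real.exp ((r y + c) / β) := by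
        rw [← h2, Real.exp_log (div_pos (hq y) (hrefpos y))]
      have h4 : q y = πref y * Real.exp ((r y + c) / β) := by
        rw [← h3]; field_simp [(hrefpos y).ne']
      rw [h4, add_div, Real.exp_add]
      ring
    have hsum1 : partZ πref β r * Real.exp (c / β) = 1 := by
      rw [← hqs]
      unfold partZ
      rw [Finset.sum_mul]
      exact Finset.sum_congr rfl fun y _ => (hqy y).symm
    have hk : Real.exp (c / β) = 1 / partZ πref β r := by
      field_simp
      linarith [hsum1]
    funext y
    rw [hqy y, hk]
    unfold gibbs
    field_simp
  constructor
  · -- DPO part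
    intro q hq hqs
    have key : ∀ y1 y2 : Y,
        (w y1 y2 * (sigm (r y1 - r y2) *
            (-Real.log (sigm (implicitReward πref β (gibbs πref β r) y1
              - implicitReward πref β (gibbs πref β r) y2))) +
          sigm (r y2 - r y1) *
            (-Real.log (sigm (implicitReward πref β (gibbs πref β r) y2
              - implicitReward πref β (gibbs πref β r) y1)))) ≤
        w y1 y2 * (sigm (r y1 - r y2) *
            (-Real.log (sigm (implicitReward πref β q y1 - implicitReward πref β q y2))) +
          sigm (r y2 - r y1) *
            (-Real.log (sigm (implicitReward πref β q y2 - implicitReward πref β q y1))))) ∧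
        ((w y1 y2 * (sigm (r y1 - r y2) *
            (-Real.log (sigm (implicitReward πref β q y1 - implicitReward πref β q y2))) +
          sigm (r y2 - r y1) *
            (-Real.log (sigm (implicitReward πref β q y2 - implicitReward πref β q y1)))) =
          w y1 y2 * (sigm (r y1 - r y2) *
            (-Real.log (sigm (implicitReward πref β (gibbs πref β r) y1
              - implicitReward πref β (gibbs πref β r) y2))) +
          sigm (r y2 - r y1) *
            (-Real.log (sigm (implicitReward πref β (gibbs πref β r) y2
              - implicitReward πref β (gibbs πref β r) y1))))) ↔
          implicitReward πref β q y1 - implicitReward πref β q y2 = r y1 - r y2) := by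
      intro y1 y2
      have hd1 : implicitReward πref β (gibbs πref β r) y1
          - implicitReward πref β (gibbs πref β r) y2 = r y1 - r y2 := by
        rw [hIRg, hIRg]; ring
      have hd2 : implicitReward πref β (gibbs πref β r) y2
          - implicitReward πref β (gibbs πref β r) y1 = -(r y1 - r y2) := by
        rw [hIRg, hIRg]; ring
      have hd3 : implicitReward πref β q y2 - implicitReward πref β q y1
          = -(implicitReward πref β q y1 - implicitReward πref β q y2) := by ring
      have hd4 : r y2 - r y1 = -(r y1 - r y2) := by ring
      rw [hd1, hd2, hd3, hd4, sigm_neg, sigm_neg]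
      set p := sigm (r y1 - r y2) with hp
      set s := sigm (implicitReward πref β q y1 - implicitReward πref β q y2) with hs
      have hce := ce_key (sigm_pos (r y1 - r y2)) (sigm_lt_one (r y1 - r y2))
        (sigm_pos (implicitReward πref β q y1 - implicitReward πref β q y2))
        (sigm_lt_one (implicitReward πref β q y1 - implicitReward πref β q y2))
      refine ⟨mul_le_mul_of_nonneg_left hce.1 (hw y1 y2).le, ?_, ?_⟩
      · intro he
        have h5 := mul_left_cancel₀ (hw y1 y2).ne' he
        have h6 : s = p := hce.2.mp h5
        exact sigm_injective h6
      · intro he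
        have h6 : s = p := by rw [hs, hp, he]
        rw [hce.2.mpr h6]
    have hle : dpoLoss πref β r w (gibbs πref β r) ≤ dpoLoss πref β r w q := by
      unfold dpoLoss
      exact Finset.sum_le_sum fun y1 _ => Finset.sum_le_sum fun y2 _ => (key y1 y2).1
    refine ⟨hle, ?_, ?_⟩
    · intro heq
      apply hrecover q hq hqs
      intro y1 y2
      unfold dpoLoss at heq
      have houter := (Finset.sum_eq_sum_iff_of_le
        (fun y1 _ => Finset.sum_le_sum fun y2 _ => (key y1 y2).1)).mp heq.symm
      have hinner := (Finset.sum_eq_sum_iff_of_le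
        (fun y2 _ => (key y1 y2).1)).mp (houter y1 (Finset.mem_univ y1))
      exact (key y1 y2).2.mp (hinner y2 (Finset.mem_univ y2)).symm
    · rintro rfl; rfl
  · -- AWR part
    intro q hq hqs
    have hterm : ∀ y ∈ Finset.univ, gibbs πref β r y * Real.log (q y)
        - gibbs πref β r y * Real.log (gibbs πref β r y) ≤ q y - gibbs πref β r y :=
      fun y _ => (gibbs_ineq (hgpos y) (hq y)).1
    have hsum0 : ∑ y, (q y - gibbs πref β r y) = 0 := by
      rw [Finset.sum_sub_distrib, hqs, hgsum]; ring
    have hawr : awrObjective πref β r q - awrObjective πref β r (gibbs πref β r)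
        = partZ πref β r * ∑ y, (gibbs πref β r y * Real.log (q y)
          - gibbs πref β r y * Real.log (gibbs πref β r y)) := by
      unfold awrObjective
      rw [Finset.mul_sum, ← Finset.sum_sub_distrib]
      refine Finset.sum_congr rfl fun y _ => ?_
      rw [hrefZ y]; ring
    have hS : ∑ y, (gibbs πref β r y * Real.log (q y)
        - gibbs πref β r y * Real.log (gibbs πref β r y)) ≤ 0 := by
      calc _ ≤ ∑ y, (q y - gibbs πref β r y) := Finset.sum_le_sum hterm
      _ = 0 := hsum0
    have hle : awrObjective πref β r q ≤ awrObjective πref β r (gibbs πref β r) := by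
      nlinarith [hawr, hS, hZ]
    refine ⟨hle, ?_, ?_⟩
    · intro heq
      have hS0 : ∑ y, (gibbs πref β r y * Real.log (q y)
          - gibbs πref β r y * Real.log (gibbs πref β r y)) = 0 := by
        have : partZ πref β r * ∑ y, (gibbs πref β r y * Real.log (q y)
            - gibbs πref β r y * Real.log (gibbs πref β r y)) = 0 := by
          rw [← hawr, heq]; ring
        exact (mul_eq_zero.mp this).resolve_left hZ.ne'
      have hall := (Finset.sum_eq_sum_iff_of_le hterm).mp (by rw [hS0, hsum0])
      funext y
      exact ((gibbs_ineq (hgpos y) (hq y)).2.mp (hall y (Finset.mem_univ y)))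
    · rintro rfl; rfl
end

section
/- Performance difference lemma: for any two policies π and π', V_{π'}(L, x) − V_π(L, x) = Σ_{t=0}^{L−1} Σ_{(a_1,…,a_{t+1})∈T^{t+1}} P_{π'}(a_1,…,a_{t+1})·A_π(L−t, s_t, a_{t+1}), where s_t = x ++ [a_1,…,a_t]; i.e., the difference in returns equals the sum over time steps of the expected advantage of π evaluated along trajectories generated by π'. -/
open Real Finset

variable {T : Type*} [Fintype T] [Nonempty T]

/-- A policy assigns a probability vector over next tokens to every state (list). -/
def IsPolicy (pol : List T → T → ℝ) : Prop :=
  ∀ s : List T, (∀ a, 0 ≤ pol s a) ∧ ∑ a, pol s a = 1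

/-- `traj pol s as` is the probability that policy `pol`, starting from state `s`,
produces the sequence of actions `as`. -/
noncomputable def traj (pol : List T → T → ℝ) : List T → List T → ℝ
  | _, [] => 1
  | s, a :: as => pol s a * traj pol (s ++ [a]) as

/-- The value function `V_pol(k, s)` with `k` remaining steps and terminal reward `r`. -/
noncomputable def Vval (r : List T → ℝ) (pol : List T → T → ℝ) : ℕ → List T → ℝ
  | 0, s => r s
  | k + 1, s => ∑ a, pol s a * Vval r pol k (s ++ [a])

/-- The advantage `A_pol(k, s, a) = Q_pol(k, s, a) - V_pol(k, s)` for `k ≥ 1` remaining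
steps, where `Q_pol(k+1, s, a) = V_pol(k, s ++ [a])`. (Value `0` at `k = 0` is junk.) -/
noncomputable def Adv (r : List T → ℝ) (pol : List T → T → ℝ) : ℕ → List T → T → ℝ
  | 0, _, _ => 0
  | k + 1, s, a => Vval r pol k (s ++ [a]) - Vval r pol (k + 1) s

lemma traj_append (pol : List T → T → ℝ) (s l1 l2 : List T) :
    traj pol s (l1 ++ l2) = traj pol s l1 * traj pol (s ++ l1) l2 := by
  induction l1 generalizing s with
  | nil => simp [traj]
  | cons a as ih =>
      rw [List.cons_append]
      show pol s a * traj pol (s ++ [a]) (as ++ l2) = _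
      rw [ih]
      simp [traj, List.append_assoc, mul_assoc]

lemma ofFn_snoc' {t : ℕ} (a : Fin (t + 1) → T) :
    List.ofFn a = List.ofFn (fun i : Fin t => a i.castSucc) ++ [a (Fin.last t)] := by
  rw [List.ofFn_succ' a]; simp [List.concat_eq_append]

/-- Expectation form of the value function. -/
lemma Vval_eq_sum (r : List T → ℝ) (pol : List T → T → ℝ) (L : ℕ) (x : List T) :
    Vval r pol L x = ∑ a : Fin L → T, traj pol x (List.ofFn a) * r (x ++ List.ofFn a) := by
  induction L generalizing x with
  | zero =>
      simp [Vval, traj]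
  | succ n ih =>
      rw [show Vval r pol (n + 1) x = ∑ b, pol x b * Vval r pol n (x ++ [b]) from rfl]
      rw [← Equiv.sum_comp (Fin.consEquiv (fun _ : Fin (n + 1) => T)), Fintype.sum_prod_type]
      refine Finset.sum_congr rfl fun b _ => ?_
      rw [ih (x ++ [b]), Finset.mul_sum]
      refine Finset.sum_congr rfl fun f _ => ?_
      have h1 : List.ofFn ((Fin.consEquiv fun _ : Fin (n+1) => T) (b, f)) = b :: List.ofFn f := by
        simp [Fin.consEquiv, List.ofFn_succ, Fin.cons]
      rw [h1]
      simp [traj, List.append_assoc, mul_assoc]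

/-- Performance difference lemma: the difference in returns of two policies equals
the sum over time steps of the expected advantage of `pol` along trajectories of `pol'`. -/
theorem performance_difference_lemma
    (r : List T → ℝ) (pol pol' : List T → T → ℝ)
    (hpol : IsPolicy pol) (hpol' : IsPolicy pol')
    (L : ℕ) (x : List T) :
    Vval r pol' L x - Vval r pol L x =
      ∑ t ∈ Finset.range L, ∑ a : Fin (t + 1) → T,
        traj pol' x (List.ofFn a) *
          Adv r pol (L - t) (x ++ List.ofFn (fun i : Fin t => a i.castSucc))
            (a (Fin.last t)) := by
  set W : ℕ → ℝ := fun t =>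
    ∑ a : Fin t → T, traj pol' x (List.ofFn a) * Vval r pol (L - t) (x ++ List.ofFn a) with hW
  have hW0 : W 0 = Vval r pol L x := by
    simp [hW, traj]
  have hWL : W L = Vval r pol' L x := by
    rw [Vval_eq_sum r pol' L x]
    simp [hW, Vval]
  have key : ∀ t ∈ Finset.range L,
      (∑ a : Fin (t + 1) → T,
        traj pol' x (List.ofFn a) *
          Adv r pol (L - t) (x ++ List.ofFn (fun i : Fin t => a i.castSucc))
            (a (Fin.last t))) = W (t + 1) - W t := by
    intro t ht
    rw [Finset.mem_range] at ht
    obtain ⟨k, hk⟩ : ∃ k, L - t = k + 1 := ⟨L - t - 1, by omega⟩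
    have hk' : L - (t + 1) = k := by omega
    have expand : ∀ a : Fin (t + 1) → T,
        traj pol' x (List.ofFn a) *
          Adv r pol (L - t) (x ++ List.ofFn (fun i : Fin t => a i.castSucc)) (a (Fin.last t))
        = traj pol' x (List.ofFn a) * Vval r pol (L - (t+1)) (x ++ List.ofFn a)
          - traj pol' x (List.ofFn a) *
              Vval r pol (L - t) (x ++ List.ofFn (fun i : Fin t => a i.castSucc)) := by
      intro a
      rw [hk, hk', Adv, mul_sub]
      congr 3
      rw [ofFn_snoc' a, List.append_assoc]
    rw [Finset.sum_congr rfl fun a _ => expand a, Finset.sum_sub_distrib]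
    congr 1
    rw [hW]
    rw [← Equiv.sum_comp (Fin.snocEquiv (fun _ : Fin (t + 1) => T)), Fintype.sum_prod_type,
      Finset.sum_comm]
    refine Finset.sum_congr rfl fun f _ => ?_
    have hsnoc : ∀ b : T, List.ofFn ((Fin.snocEquiv fun _ : Fin (t+1) => T) (b, f))
        = List.ofFn f ++ [b] := by
      intro b
      rw [ofFn_snoc']
      simp [Fin.snocEquiv]
    have hcast : ∀ b : T,
        (fun i : Fin t => (Fin.snocEquiv (fun _ : Fin (t+1) => T)) (b, f) i.castSucc) = f := by
      intro b; funext i; simp [Fin.snocEquiv]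
    calc ∑ b : T, traj pol' x (List.ofFn ((Fin.snocEquiv fun _ : Fin (t+1) => T) (b, f))) *
            Vval r pol (L - t) (x ++ List.ofFn
              (fun i : Fin t => (Fin.snocEquiv fun _ : Fin (t+1) => T) (b, f) i.castSucc))
        = ∑ b : T, traj pol' x (List.ofFn f) * pol' (x ++ List.ofFn f) b *
            Vval r pol (L - t) (x ++ List.ofFn f) := by
          refine Finset.sum_congr rfl fun b _ => ?_
          rw [hsnoc b, hcast b, traj_append]
          simp [traj]
      _ = traj pol' x (List.ofFn f) * Vval r pol (L - t) (x ++ List.ofFn f) := by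
          rw [← Finset.sum_mul, ← Finset.mul_sum, (hpol' (x ++ List.ofFn f)).2, mul_one]
  rw [Finset.sum_congr rfl key, Finset.sum_range_sub W L, hW0, hWL]
end

section
/- Suppose π_sft is a policy with π_sft(a|s) > 0 for all s, a, β > 0, and the policy π_neg is the per-state exponential tilt of π_sft by its own advantages: for every t with 0 ≤ t < L and every list s with |s| = |x| + t, π_neg(a|s) = π_sft(a|s)·exp( A_{π_sft}(L−t, s, a)/β ) / Z(s), where Z(s) = Σ_{a∈T} π_sft(a|s)·exp( A_{π_sft}(L−t, s, a)/β ). Then the returns satisfy V_{π_neg}(L, x) − V_{π_sft}(L, x) = β·Σ_{t=0}^{L−1} Σ_{(a_1,…,a_t)∈T^t} P_{π_neg}(a_1,…,a_t)·[ KL( π_neg(·|s_t) ‖ π_sft(·|s_t) ) + log Z(s_t) ] ≥ β·Σ_{t=0}^{L−1} Σ_{(a_1,…,a_t)∈T^t} P_{π_neg}(a_1,…,a_t)·log Z(s_t). -/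
open Real Finset

variable {T : Type*} [Fintype T] [Nonempty T]

/-- KL divergence between probability vectors on the token type
(with the convention `0 * log 0 = 0`, automatic since `Real.log 0 = 0`). -/
noncomputable def KLdiv (q q' : T → ℝ) : ℝ := ∑ a, q a * Real.log (q a / q' a)

lemma traj_nonneg (pol : List T → T → ℝ) (h : ∀ s a, 0 ≤ pol s a) :
    ∀ (as s : List T), 0 ≤ traj pol s as := by
  intro as
  induction as with
  | nil => intro s; simp [traj]
  | cons a as ih => intro s; simpa [traj] using mul_nonneg (h s a) (ih (s ++ [a]))

lemma KLdiv_nonneg (q p : T → ℝ) (hq0 : ∀ a, 0 ≤ q a) (hq1 : ∑ a, q a = 1)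
    (hp0 : ∀ a, 0 < p a) (hp1 : ∑ a, p a = 1) : 0 ≤ KLdiv q p := by
  have key : ∑ a, q a * Real.log (p a / q a) ≤ 0 := by
    have : ∑ a, q a * Real.log (p a / q a) ≤ ∑ a, (p a - q a) := by
      apply Finset.sum_le_sum
      intro a _
      rcases eq_or_lt_of_le (hq0 a) with h0 | h0
      · rw [← h0]; simpa using le_of_lt (hp0 a)
      · have hpos : 0 < p a / q a := div_pos (hp0 a) h0
        have h2 := mul_le_mul_of_nonneg_left (Real.log_le_sub_one_of_pos hpos) (le_of_lt h0)
        calc q a * Real.log (p a / q a) ≤ q a * (p a / q a - 1) := h2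
          _ = p a - q a := by field_simp
    simpa [Finset.sum_sub_distrib, hp1, hq1] using this
  have hrw : KLdiv q p = -∑ a, q a * Real.log (p a / q a) := by
    unfold KLdiv
    rw [← Finset.sum_neg_distrib]
    apply Finset.sum_congr rfl
    intro a _
    have h3 : q a / p a = (p a / q a)⁻¹ := by rw [inv_div]
    rw [h3, Real.log_inv]; ring
  rw [hrw]
  linarith

lemma tilt_identity (p q A : T → ℝ) (Zv β : ℝ) (hβ : 0 < β)
    (hp : ∀ a, 0 < p a) (hq1 : ∑ a, q a = 1)
    (hZ : Zv = ∑ a, p a * Real.exp (A a / β))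
    (ht : ∀ a, q a = p a * Real.exp (A a / β) / Zv) :
    ∑ a, q a * A a = β * (KLdiv q p + Real.log Zv) := by
  have hZpos : 0 < Zv := by
    rw [hZ]
    exact Finset.sum_pos (fun a _ => mul_pos (hp a) (Real.exp_pos _))
      Finset.univ_nonempty
  have hlog : ∀ a, Real.log (q a / p a) = A a / β - Real.log Zv := by
    intro a
    have h1 : q a / p a = Real.exp (A a / β) / Zv := by
      rw [ht a]
      field_simp [(hp a).ne', hZpos.ne']
    rw [h1, Real.log_div (Real.exp_ne_zero _) (ne_of_gt hZpos), Real.log_exp]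
  have hKL : KLdiv q p = (∑ a, q a * A a) / β - Real.log Zv := by
    unfold KLdiv
    have : ∀ a ∈ Finset.univ, q a * Real.log (q a / p a) = q a * A a / β - q a * Real.log Zv := by
      intro a _
      rw [hlog a]; ring
    rw [Finset.sum_congr rfl this, Finset.sum_sub_distrib, ← Finset.sum_div,
      ← Finset.sum_mul, hq1, one_mul]
  rw [hKL]
  field_simp
  ring

lemma telescope (r : List T → ℝ) (πsft πneg : List T → T → ℝ)
    (hs1 : ∀ s, ∑ a, πsft s a = 1) (hn1 : ∀ s, ∑ a, πneg s a = 1) :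
    ∀ (L : ℕ) (x : List T),
      Vval r πneg L x - Vval r πsft L x =
        ∑ t ∈ Finset.range L, ∑ a : Fin t → T,
          traj πneg x (List.ofFn a) *
            ∑ b, πneg (x ++ List.ofFn a) b * Adv r πsft (L - t) (x ++ List.ofFn a) b := by
  intro L
  induction L with
  | zero => intro x; simp [Vval]
  | succ L ih =>
    intro x
    rw [Finset.sum_range_succ']
    have h0 : (∑ a : Fin 0 → T, traj πneg x (List.ofFn a) *
        ∑ b, πneg (x ++ List.ofFn a) b * Adv r πsft (L + 1 - 0) (x ++ List.ofFn a) b)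
        = ∑ b, πneg x b * Adv r πsft (L + 1) x b := by
      rw [Fintype.sum_unique]
      simp [traj]
    rw [h0]
    have h1 : ∀ t ∈ Finset.range L,
        (∑ a : Fin (t+1) → T, traj πneg x (List.ofFn a) *
          ∑ b, πneg (x ++ List.ofFn a) b * Adv r πsft (L + 1 - (t+1)) (x ++ List.ofFn a) b)
        = ∑ c : T, πneg x c * ∑ v : Fin t → T, traj πneg (x ++ [c]) (List.ofFn v) *
            ∑ b, πneg ((x ++ [c]) ++ List.ofFn v) b * Adv r πsft (L - t) ((x ++ [c]) ++ List.ofFn v) b := by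
      intro t _
      have step1 : (∑ a : Fin (t+1) → T, traj πneg x (List.ofFn a) *
          ∑ b, πneg (x ++ List.ofFn a) b * Adv r πsft (L + 1 - (t+1)) (x ++ List.ofFn a) b)
          = ∑ p : T × (Fin t → T), πneg x p.1 * (traj πneg (x ++ [p.1]) (List.ofFn p.2) *
              ∑ b, πneg ((x ++ [p.1]) ++ List.ofFn p.2) b * Adv r πsft (L - t) ((x ++ [p.1]) ++ List.ofFn p.2) b) := by
        apply Fintype.sum_equiv (Fin.consEquiv (fun _ : Fin (t+1) => T)).symm
        intro f
        have hf : List.ofFn f = f 0 :: List.ofFn (fun i : Fin t => f i.succ) := by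
          rw [List.ofFn_succ]
        have hcons : (Fin.consEquiv (fun _ : Fin (t+1) => T)).symm f
            = (f 0, fun i => f i.succ) := rfl
        rw [hcons, hf]
        have hLt : L + 1 - (t+1) = L - t := Nat.succ_sub_succ L t
        rw [hLt]
        simp only [traj, List.append_assoc, List.cons_append, List.nil_append]
        ring
      rw [step1, Fintype.sum_prod_type]
      simp only [Finset.mul_sum]
    rw [Finset.sum_congr rfl h1, Finset.sum_comm]
    simp only [← Finset.mul_sum]
    have ih' : ∀ c : T, (∑ t ∈ Finset.range L, ∑ v : Fin t → T,
        traj πneg (x ++ [c]) (List.ofFn v) *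
          ∑ b, πneg ((x ++ [c]) ++ List.ofFn v) b * Adv r πsft (L - t) ((x ++ [c]) ++ List.ofFn v) b)
        = Vval r πneg L (x ++ [c]) - Vval r πsft L (x ++ [c]) := fun c => (ih (x ++ [c])).symm
    rw [Finset.sum_congr rfl (fun c _ => by rw [ih' c])]
    simp only [Vval, Adv]
    have hc : ∑ b : T, πneg x b * (∑ a, πsft x a * Vval r πsft L (x ++ [a]))
        = ∑ a, πsft x a * Vval r πsft L (x ++ [a]) := by
      rw [← Finset.sum_mul, hn1, one_mul]
    simp only [mul_sub, Finset.sum_sub_distrib, hc]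
    ring

/-- If `π_neg` is the per-state exponential tilt of `π_sft` by its own advantages,
then the difference in returns equals `β` times the expected sum of per-step KL
divergences plus log-partition terms, and is lower bounded by `β` times the
expected sum of log-partition terms. -/
theorem tilted_policy_return_difference
    (r : List T → ℝ) (πsft πneg : List T → T → ℝ)
    (hsft : IsPolicy πsft) (hsftpos : ∀ s a, 0 < πsft s a)
    (hneg : IsPolicy πneg)
    (β : ℝ) (hβ : 0 < β) (L : ℕ) (x : List T)
    (Z : List T → ℝ)
    (hZ : ∀ t < L, ∀ s : List T, s.length = x.length + t →
      Z s = ∑ a, πsft s a * Real.exp (Adv r πsft (L - t) s a / β))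
    (htilt : ∀ t < L, ∀ s : List T, s.length = x.length + t → ∀ a,
      πneg s a = πsft s a * Real.exp (Adv r πsft (L - t) s a / β) / Z s) :
    Vval r πneg L x - Vval r πsft L x =
      β * ∑ t ∈ Finset.range L, ∑ a : Fin t → T,
        traj πneg x (List.ofFn a) *
          (KLdiv (πneg (x ++ List.ofFn a)) (πsft (x ++ List.ofFn a)) +
            Real.log (Z (x ++ List.ofFn a))) ∧
    Vval r πneg L x - Vval r πsft L x ≥
      β * ∑ t ∈ Finset.range L, ∑ a : Fin t → T,
        traj πneg x (List.ofFn a) * Real.log (Z (x ++ List.ofFn a)) := by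
  have hs1 : ∀ s, ∑ a, πsft s a = 1 := fun s => (hsft s).2
  have hn1 : ∀ s, ∑ a, πneg s a = 1 := fun s => (hneg s).2
  have hn0 : ∀ s a, 0 ≤ πneg s a := fun s => (hneg s).1
  have heq : Vval r πneg L x - Vval r πsft L x =
      β * ∑ t ∈ Finset.range L, ∑ a : Fin t → T,
        traj πneg x (List.ofFn a) *
          (KLdiv (πneg (x ++ List.ofFn a)) (πsft (x ++ List.ofFn a)) +
            Real.log (Z (x ++ List.ofFn a))) := by
    rw [telescope r πsft πneg hs1 hn1 L x, Finset.mul_sum]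
    apply Finset.sum_congr rfl
    intro t ht
    rw [Finset.mul_sum]
    apply Finset.sum_congr rfl
    intro a _
    have htL : t < L := Finset.mem_range.mp ht
    have hlen : (x ++ List.ofFn a).length = x.length + t := by simp
    have key := tilt_identity (πsft (x ++ List.ofFn a)) (πneg (x ++ List.ofFn a))
      (fun b => Adv r πsft (L - t) (x ++ List.ofFn a) b) (Z (x ++ List.ofFn a)) β hβ
      (hsftpos (x ++ List.ofFn a)) (hn1 (x ++ List.ofFn a))
      (hZ t htL (x ++ List.ofFn a) hlen) (htilt t htL (x ++ List.ofFn a) hlen)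
    rw [key]
    ring
  refine ⟨heq, ?_⟩
  rw [heq]
  apply mul_le_mul_of_nonneg_left _ hβ.le
  apply Finset.sum_le_sum
  intro t _
  apply Finset.sum_le_sum
  intro a _
  have hKLnn : 0 ≤ KLdiv (πneg (x ++ List.ofFn a)) (πsft (x ++ List.ofFn a)) :=
    KLdiv_nonneg _ _ (hn0 _) (hn1 _) (hsftpos _) (hs1 _)
  exact mul_le_mul_of_nonneg_left (by linarith) (traj_nonneg πneg hn0 _ _)
end

section
/- Suppose π_sft is a policy with π_sft(a|s) > 0 for all s, a, β > 0, and the policy π_neg is the per-state exponential tilt of π_sft by its own advantages: for every t with 0 ≤ t < L and every list s with |s| = |x| + t, π_neg(a|s) = π_sft(a|s)·exp( A_{π_sft}(L−t, s, a)/β ) / Z(s), where Z(s) = Σ_{a∈T} π_sft(a|s)·exp( A_{π_sft}(L−t, s, a)/β ). Then log Z(s) ≥ 0 for every such state s, and consequently V_{π_neg}(L, x) ≥ V_{π_sft}(L, x): tilting the SFT policy by its own exact advantages never decreases the return. -/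
open Real Finset

variable {T : Type*} [Fintype T] [Nonempty T]

/-- If `π_neg` is the per-state exponential tilt of `π_sft` by its own exact
advantages, then every log-partition constant is non-negative, and consequently
the return of `π_neg` is at least the return of `π_sft`. -/
theorem tilted_policy_never_decreases_return
    (r : List T → ℝ) (πsft πneg : List T → T → ℝ)
    (hsft : IsPolicy πsft) (hsftpos : ∀ s a, 0 < πsft s a)
    (hneg : IsPolicy πneg)
    (β : ℝ) (hβ : 0 < β) (L : ℕ) (x : List T)
    (Z : List T → ℝ)
    (hZ : ∀ t < L, ∀ s : List T, s.length = x.length + t →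
      Z s = ∑ a, πsft s a * Real.exp (Adv r πsft (L - t) s a / β))
    (htilt : ∀ t < L, ∀ s : List T, s.length = x.length + t → ∀ a,
      πneg s a = πsft s a * Real.exp (Adv r πsft (L - t) s a / β) / Z s) :
    (∀ t < L, ∀ s : List T, s.length = x.length + t → 0 ≤ Real.log (Z s)) ∧
    Vval r πsft L x ≤ Vval r πneg L x := by
  -- expected advantage under πsft is zero
  have hsum0 : ∀ (k : ℕ) (s : List T), ∑ a, πsft s a * Adv r πsft (k + 1) s a = 0 := by
    intro k s
    have h1 : ∑ a, πsft s a * Adv r πsft (k + 1) s a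
        = (∑ a, πsft s a * Vval r πsft k (s ++ [a]))
          - (∑ a, πsft s a) * Vval r πsft (k + 1) s := by
      rw [Finset.sum_mul, ← Finset.sum_sub_distrib]
      congr 1; ext a; simp [Adv, mul_sub]
    rw [h1, (hsft s).2, one_mul]
    have : Vval r πsft (k + 1) s = ∑ a, πsft s a * Vval r πsft k (s ++ [a]) := rfl
    linarith
  -- positivity of Z on applicable states
  have hZpos : ∀ t < L, ∀ s : List T, s.length = x.length + t → 0 < Z s := by
    intro t ht s hs
    rw [hZ t ht s hs]
    exact Finset.sum_pos (fun a _ => mul_pos (hsftpos s a) (Real.exp_pos _))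
      Finset.univ_nonempty
  have hL : ∀ t, t < L → L - t = (L - t - 1) + 1 := fun t ht => (Nat.succ_pred_eq_of_pos (Nat.sub_pos_of_lt ht)).symm
  -- Z ≥ 1
  have hZ1 : ∀ t < L, ∀ s : List T, s.length = x.length + t → 1 ≤ Z s := by
    intro t ht s hs
    rw [hZ t ht s hs]
    have hlb : ∀ a ∈ Finset.univ, πsft s a * (1 + Adv r πsft (L - t) s a / β)
        ≤ πsft s a * Real.exp (Adv r πsft (L - t) s a / β) := by
      intro a _
      have := Real.add_one_le_exp (Adv r πsft (L - t) s a / β)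
      exact mul_le_mul_of_nonneg_left (by linarith) ((hsft s).1 a)
    refine le_trans ?_ (Finset.sum_le_sum hlb)
    have : ∑ a, πsft s a * (1 + Adv r πsft (L - t) s a / β)
        = (∑ a, πsft s a) + (∑ a, πsft s a * Adv r πsft (L - t) s a) / β := by
      rw [Finset.sum_div]
      rw [← Finset.sum_add_distrib]
      congr 1; ext a; field_simp
    rw [this, (hsft s).2, hL t ht, hsum0 (L - t - 1) s]
    simp
  refine ⟨fun t ht s hs => Real.log_nonneg (hZ1 t ht s hs), ?_⟩
  -- main induction
  have key : ∀ k, k ≤ L → ∀ s : List T, s.length = x.length + (L - k) →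
      Vval r πsft k s ≤ Vval r πneg k s := by
    intro k
    induction k with
    | zero => intro _ s _; exact le_refl _
    | succ k ih =>
      intro hk s hs
      have hk' : k ≤ L := Nat.le_of_succ_le hk
      have ht : L - (k + 1) < L := Nat.sub_lt (Nat.lt_of_lt_of_le (Nat.zero_lt_succ k) hk) (Nat.zero_lt_succ k)
      have hLt : L - (L - (k + 1)) = k + 1 := Nat.sub_sub_self hk
      have hZp := hZpos _ ht s hs
      -- step 1: IH on children
      have hchild : ∀ a : T, (s ++ [a]).length = x.length + (L - k) := by
        intro a
        have : L - k = (L - (k + 1)) + 1 := by omega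
        simp [hs, this]; omega
      have h1 : ∑ a, πneg s a * Vval r πsft k (s ++ [a])
          ≤ ∑ a, πneg s a * Vval r πneg k (s ++ [a]) :=
        Finset.sum_le_sum fun a _ =>
          mul_le_mul_of_nonneg_left (ih hk' (s ++ [a]) (hchild a)) ((hneg s).1 a)
      -- step 2: expected advantage under πneg is ≥ 0
      have hadv : 0 ≤ ∑ a, πneg s a * Adv r πsft (k + 1) s a := by
        have hform : ∀ a, πneg s a * Adv r πsft (k + 1) s a
            = πsft s a * (Adv r πsft (k + 1) s a * Real.exp (Adv r πsft (k + 1) s a / β)) / Z s := by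
          intro a
          rw [htilt _ ht s hs a, hLt]; ring
        rw [Finset.sum_congr rfl fun a _ => hform a, ← Finset.sum_div]
        apply div_nonneg _ (le_of_lt hZp)
        have hterm : ∀ a, 0 ≤ πsft s a * (Adv r πsft (k + 1) s a * (Real.exp (Adv r πsft (k + 1) s a / β) - 1)) := by
          intro a
          apply mul_nonneg (le_of_lt (hsftpos s a))
          set A := Adv r πsft (k + 1) s a with hA
          rcases le_or_gt 0 A with h | h
          · exact mul_nonneg h (by nlinarith [Real.one_le_exp (div_nonneg h (le_of_lt hβ))])
          · have : Real.exp (A / β) ≤ 1 := Real.exp_le_one_iff.mpr (div_nonpos_of_nonpos_of_nonneg (le_of_lt h) (le_of_lt hβ))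
            exact mul_nonneg_iff.mpr (Or.inr ⟨le_of_lt h, by linarith⟩)
        have : ∑ a, πsft s a * (Adv r πsft (k + 1) s a * Real.exp (Adv r πsft (k + 1) s a / β))
            = (∑ a, πsft s a * (Adv r πsft (k + 1) s a * (Real.exp (Adv r πsft (k + 1) s a / β) - 1)))
              + ∑ a, πsft s a * Adv r πsft (k + 1) s a := by
          rw [← Finset.sum_add_distrib]; congr 1; ext a; ring
        rw [this, hsum0 k s, add_zero]
        exact Finset.sum_nonneg fun a _ => hterm a
      -- combine
      have h2 : Vval r πsft (k + 1) s ≤ ∑ a, πneg s a * Vval r πsft k (s ++ [a]) := by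
        have hexp : ∑ a, πneg s a * Vval r πsft k (s ++ [a])
            = (∑ a, πneg s a * Adv r πsft (k + 1) s a)
              + (∑ a, πneg s a) * Vval r πsft (k + 1) s := by
          rw [Finset.sum_mul, ← Finset.sum_add_distrib]
          congr 1; ext a; simp [Adv]; ring
        rw [hexp, (hneg s).2, one_mul]
        linarith
      calc Vval r πsft (k + 1) s ≤ ∑ a, πneg s a * Vval r πsft k (s ++ [a]) := h2
        _ ≤ ∑ a, πneg s a * Vval r πneg k (s ++ [a]) := h1
        _ = Vval r πneg (k + 1) s := rfl
  have := key L (le_refl L) x (by simp)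
  exact this
end
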